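/- arXiv:1511.03003 — 4 statements merged into one kernel-verified Lean document; each statement's English description precedes it below -/
import Mathlib

section
/- With f = (1/4, 1/4, 1/4, 1/4)ᵀ, A the 4×4 matrix with rows (1/2,0,0,1/2), (1/4,1/2,0,1/4), (1/3,1/3,1/3,0), (0,0,0,1), and g' = (0, 4/3, 8/3, 0)ᵀ, for all natural numbers n we have fᵀ · Aⁿ · g' = (1/2)ⁿ. -/
open Matrix

theorem stmt4 (n : ℕ) :
    (![1/4, 1/4, 1/4, 1/4] : Fin 4 → ℚ) ⬝ᵥ
      (((!![1/2, 0, 0, 1/2; 1/4, 1/2, 0, 1/4; 1/3, 1/3, 1/3, 0; 0, 0, 0, 1] :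
        Matrix (Fin 4) (Fin 4) ℚ) ^ n).mulVec ![0, 4/3, 8/3, 0])
      = (1/2 : ℚ) ^ n := by
  have key : ∀ m : ℕ, ((!![1/2, 0, 0, 1/2; 1/4, 1/2, 0, 1/4; 1/3, 1/3, 1/3, 0; 0, 0, 0, 1] :
      Matrix (Fin 4) (Fin 4) ℚ) ^ m).mulVec ![0, 4/3, 8/3, 0]
      = (1/2 : ℚ) ^ m • ![0, 4/3, 8/3, 0] := by
    intro m
    induction m with
    | zero => simp
    | succ k ih =>
      have step : (!![1/2, 0, 0, 1/2; 1/4, 1/2, 0, 1/4; 1/3, 1/3, 1/3, 0; 0, 0, 0, 1] :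
          Matrix (Fin 4) (Fin 4) ℚ).mulVec ![0, 4/3, 8/3, 0] = (1/2 : ℚ) • ![0, 4/3, 8/3, 0] := by
        funext i
        fin_cases i <;>
          simp [Matrix.mulVec, dotProduct, Fin.sum_univ_four] <;> ring
      rw [pow_succ, pow_succ, ← Matrix.mulVec_mulVec, step, Matrix.mulVec_smul, ih,
        smul_smul]
      ring_nf
  rw [key]
  simp [dotProduct, Fin.sum_univ_four]
  ring
end

section
/- With f = (1/4, 1/4, 1/4, 1/4)ᵀ, A the 4×4 matrix with rows (1/2,0,0,1/2), (1/4,1/2,0,1/4), (1/3,1/3,1/3,0), (0,0,0,1), and g'' = (8/3, 0, −8/3, 0)ᵀ, for all natural numbers n we have fᵀ · Aⁿ · g'' = n · (1/2)ⁿ. -/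
open Matrix

lemma key5 (n : ℕ) :
    ((!![1/2, 0, 0, 1/2; 1/4, 1/2, 0, 1/4; 1/3, 1/3, 1/3, 0; 0, 0, 0, 1] :
        Matrix (Fin 4) (Fin 4) ℚ) ^ n).mulVec ![8/3, 0, -8/3, 0] =
      ![(1/2:ℚ)^n * (8/3), 2*n*(1/2)^n*(2/3),
        -(1/2:ℚ)^n*(8/3) + 2*n*(1/2)^n*(4/3), 0] := by
  induction n with
  | zero => funext i; fin_cases i <;> norm_num
  | succ n ih =>
    rw [pow_succ', ← Matrix.mulVec_mulVec, ih]
    funext i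
    push_cast
    fin_cases i <;>
      simp [Matrix.mulVec, dotProduct, Fin.sum_univ_four] <;> ring

theorem stmt5 (n : ℕ) :
    (![1/4, 1/4, 1/4, 1/4] : Fin 4 → ℚ) ⬝ᵥ
      (((!![1/2, 0, 0, 1/2; 1/4, 1/2, 0, 1/4; 1/3, 1/3, 1/3, 0; 0, 0, 0, 1] :
        Matrix (Fin 4) (Fin 4) ℚ) ^ n).mulVec ![8/3, 0, -8/3, 0])
      = (n : ℚ) * (1/2 : ℚ) ^ n := by
  rw [key5]
  simp [dotProduct, Fin.sum_univ_four]
  ring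
end

section
/- In the PO-DTMC M_𝒜 constructed from a probabilistic finite automaton 𝒜 with alphabet Σ of size N (states Q×Σ, PI(q,a) = μ₀(q)/N, PT((q,a),(q',b)) = δ(b)(q,q')/N), the total probability of all paths of length m whose observation sequence (second components) equals a fixed word a₀a₁…a_m ∈ Σ^{m+1} is exactly 1/N^{m+1}. -/
lemma aux15 {Q A : Type*} [Fintype Q] (δ : A → Q → Q → ℝ)
    (hδ1 : ∀ b q, ∑ q', δ b q q' = 1) :
    ∀ (m : ℕ) (ν : Q → ℝ), (∑ q, ν q = 1) → ∀ (a : Fin (m + 1) → A),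
      ∑ q : Fin (m + 1) → Q,
        ν (q 0) * ∏ i : Fin m, δ (a i.succ) (q i.castSucc) (q i.succ) = 1 := by
  intro m
  induction m with
  | zero =>
    intro ν hν a
    rw [← hν]
    exact Fintype.sum_equiv (Equiv.funUnique (Fin 1) Q) _ ν (fun q => by simp)
  | succ m ih =>
    intro ν hν a
    rw [← (Fin.consEquiv (fun _ : Fin (m + 2) => Q)).sum_comp]
    rw [Fintype.sum_prod_type]
    have : ∀ x : Q, ∑ f : Fin (m + 1) → Q,
        ν ((Fin.consEquiv (fun _ : Fin (m + 2) => Q)) (x, f) 0) *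
          ∏ i : Fin (m + 1), δ (a i.succ)
            ((Fin.consEquiv (fun _ : Fin (m + 2) => Q)) (x, f) i.castSucc)
            ((Fin.consEquiv (fun _ : Fin (m + 2) => Q)) (x, f) i.succ)
        = ν x := by
      intro x
      have key := ih (fun q' => δ (a 1) x q') (hδ1 (a 1) x) (fun i => a i.succ)
      calc ∑ f : Fin (m + 1) → Q,
            ν ((Fin.consEquiv (fun _ : Fin (m + 2) => Q)) (x, f) 0) *
              ∏ i : Fin (m + 1), δ (a i.succ)
                ((Fin.consEquiv (fun _ : Fin (m + 2) => Q)) (x, f) i.castSucc)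
                ((Fin.consEquiv (fun _ : Fin (m + 2) => Q)) (x, f) i.succ)
          = ν x * ∑ f : Fin (m + 1) → Q,
              δ (a 1) x (f 0) *
                ∏ i : Fin m, δ (a i.succ.succ) (f i.castSucc) (f i.succ) := by
            rw [Finset.mul_sum]
            apply Finset.sum_congr rfl
            intro f _
            simp only [Fin.consEquiv_apply, Fin.cons_zero, Fin.prod_univ_succ,
              Fin.cons_succ, Fin.castSucc_zero, Fin.succ_zero_eq_one]
            have h1 : ∀ i : Fin m, (Fin.cons x f : Fin (m+2) → Q) i.succ.castSucc = f i.castSucc := by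
              intro i
              rw [← Fin.succ_castSucc, Fin.cons_succ]
            have h2 : ∀ i : Fin m, (Fin.cons x f : Fin (m+2) → Q) i.succ.succ = f i.succ := by
              intro i; rw [Fin.cons_succ]
            simp only [h1, h2]
        _ = ν x * 1 := by rw [key]
        _ = ν x := mul_one _
    rw [Finset.sum_congr rfl (fun x _ => this x), hν]

theorem stmt15 {Q A : Type*} [Fintype Q] [Fintype A] [Nonempty A]
    (μ₀ : Q → ℝ) (δ : A → Q → Q → ℝ)
    (hμ0 : ∀ q, 0 ≤ μ₀ q) (hμ1 : ∑ q, μ₀ q = 1)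
    (hδ0 : ∀ b q q', 0 ≤ δ b q q') (hδ1 : ∀ b q, ∑ q', δ b q q' = 1)
    (m : ℕ) (a : Fin (m + 1) → A) :
    ∑ q : Fin (m + 1) → Q,
      (μ₀ (q 0) / (Fintype.card A : ℝ)) *
        ∏ i : Fin m, δ (a i.succ) (q i.castSucc) (q i.succ) / (Fintype.card A : ℝ)
      = (1 / (Fintype.card A : ℝ)) ^ (m + 1) := by
  have key := aux15 δ hδ1 m μ₀ hμ1 a
  have : ∀ q : Fin (m + 1) → Q,
      (μ₀ (q 0) / (Fintype.card A : ℝ)) *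
        ∏ i : Fin m, δ (a i.succ) (q i.castSucc) (q i.succ) / (Fintype.card A : ℝ)
      = (1 / (Fintype.card A : ℝ)) ^ (m + 1) *
          (μ₀ (q 0) * ∏ i : Fin m, δ (a i.succ) (q i.castSucc) (q i.succ)) := by
    intro q
    rw [Finset.prod_div_distrib, Finset.prod_const]
    simp [Fintype.card_fin, div_eq_mul_inv, pow_succ]
    ring
  rw [Finset.sum_congr rfl (fun q _ => this q), ← Finset.mul_sum, key, mul_one]
end

section
/- In the PO-DTMC M_𝒜 of the previous context, for a fixed observation word a₀a₁…a_m and a state q ∈ Q, the sum of the probabilities of all length-m paths whose observation sequence is a₀…a_m and whose final state is (q, a_m) equals (μ₀ᵀ · δ(a₁) · … · δ(a_m))(q) / N^{m+1}. Consequently, the conditional probability of ending in automaton state q given the observation word is (μ₀ᵀ δ(a₁)⋯δ(a_m))(q). -/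
lemma aux16 {Q : Type*} [Fintype Q] [DecidableEq Q] :
    ∀ (m : ℕ) (M : Fin m → Matrix Q Q ℝ) (μ : Q → ℝ) (qf : Q),
    (∑ q : Fin (m+1) → Q, if q (Fin.last m) = qf then
      μ (q 0) * ∏ i : Fin m, M i (q i.castSucc) (q i.succ) else 0)
    = Matrix.vecMul μ ((List.ofFn M).prod) qf := by
  intro m
  induction m with
  | zero =>
    intro M μ qf
    rw [show (List.ofFn M) = [] by simp, List.prod_nil, Matrix.vecMul_one]
    rw [← (Equiv.funUnique (Fin 1) Q).symm.sum_comp]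
    simp [Fin.last]
  | succ m ih =>
    intro M μ qf
    rw [← (Fin.consEquiv (fun _ : Fin (m+2) => Q)).sum_comp]
    rw [Fintype.sum_prod_type]
    have : ∀ (q0 : Q) (tail : Fin (m+1) → Q),
        (if (Fin.cons q0 tail : ∀ _ : Fin (m+2), Q) (Fin.last (m+1)) = qf then
          μ ((Fin.cons q0 tail : ∀ _ : Fin (m+2), Q) 0) *
            ∏ i : Fin (m+1), M i ((Fin.cons q0 tail : ∀ _ : Fin (m+2), Q) i.castSucc)
              ((Fin.cons q0 tail : ∀ _ : Fin (m+2), Q) i.succ) else 0)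
        = (if tail (Fin.last m) = qf then
            (μ q0 * M 0 q0 (tail 0)) *
              ∏ i : Fin m, M i.succ (tail i.castSucc) (tail i.succ) else 0) := by
      intro q0 tail
      have hl : (Fin.cons q0 tail : ∀ _ : Fin (m+2), Q) (Fin.last (m+1)) = tail (Fin.last m) := by
        rw [show Fin.last (m+1) = (Fin.last m).succ from rfl, Fin.cons_succ]
      rw [hl]
      congr 1
      rw [Fin.prod_univ_succ]
      simp only [Fin.cons_succ, Fin.cons_zero, mul_assoc, ← Fin.succ_castSucc]
      simp [Fin.cons_succ]
    simp only [Fin.consEquiv_apply]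
    simp only [this]
    have h2 : ∀ q0 : Q, (∑ tail : Fin (m+1) → Q, if tail (Fin.last m) = qf then
        (μ q0 * M 0 q0 (tail 0)) * ∏ i : Fin m, M i.succ (tail i.castSucc) (tail i.succ) else 0)
        = Matrix.vecMul (fun q => μ q0 * M 0 q0 q) ((List.ofFn (fun i : Fin m => M i.succ)).prod) qf := by
      intro q0
      exact ih (fun i => M i.succ) (fun q => μ q0 * M 0 q0 q) qf
    simp only [h2]
    rw [List.ofFn_succ, List.prod_cons, ← Matrix.vecMul_vecMul]
    simp only [Matrix.vecMul, dotProduct, Finset.sum_mul, mul_assoc]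
    exact Finset.sum_comm

theorem stmt16 {Q A : Type*} [Fintype Q] [DecidableEq Q] [Fintype A] [Nonempty A]
    (μ₀ : Q → ℝ) (δ : A → Q → Q → ℝ)
    (hμ0 : ∀ q, 0 ≤ μ₀ q) (hμ1 : ∑ q, μ₀ q = 1)
    (hδ0 : ∀ b q q', 0 ≤ δ b q q') (hδ1 : ∀ b q, ∑ q', δ b q q' = 1)
    (m : ℕ) (a : Fin (m + 1) → A) (qf : Q) :
    (∑ q ∈ Finset.univ.filter (fun q : Fin (m + 1) → Q => q (Fin.last m) = qf),
        (μ₀ (q 0) / (Fintype.card A : ℝ)) *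
          ∏ i : Fin m, δ (a i.succ) (q i.castSucc) (q i.succ) / (Fintype.card A : ℝ))
      = Matrix.vecMul μ₀
          ((List.ofFn (fun i : Fin m => Matrix.of (δ (a i.succ)))).prod) qf
          / (Fintype.card A : ℝ) ^ (m + 1)
    ∧ (∑ q ∈ Finset.univ.filter (fun q : Fin (m + 1) → Q => q (Fin.last m) = qf),
        (μ₀ (q 0) / (Fintype.card A : ℝ)) *
          ∏ i : Fin m, δ (a i.succ) (q i.castSucc) (q i.succ) / (Fintype.card A : ℝ))
        / (1 / (Fintype.card A : ℝ)) ^ (m + 1)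
      = Matrix.vecMul μ₀
          ((List.ofFn (fun i : Fin m => Matrix.of (δ (a i.succ)))).prod) qf := by
  have hN : (Fintype.card A : ℝ) ≠ 0 := by
    exact_mod_cast Fintype.card_pos.ne'
  have key := aux16 m (fun i => Matrix.of (δ (a i.succ))) μ₀ qf
  have h1 : (∑ q ∈ Finset.univ.filter (fun q : Fin (m + 1) → Q => q (Fin.last m) = qf),
        (μ₀ (q 0) / (Fintype.card A : ℝ)) *
          ∏ i : Fin m, δ (a i.succ) (q i.castSucc) (q i.succ) / (Fintype.card A : ℝ))
      = Matrix.vecMul μ₀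
          ((List.ofFn (fun i : Fin m => Matrix.of (δ (a i.succ)))).prod) qf
          / (Fintype.card A : ℝ) ^ (m + 1) := by
    rw [Finset.sum_filter, ← key, Finset.sum_div]
    apply Finset.sum_congr rfl
    intro q _
    by_cases h : q (Fin.last m) = qf
    · simp only [h, if_true, Matrix.of_apply]
      rw [Finset.prod_div_distrib, Finset.prod_const, Finset.card_univ, Fintype.card_fin]
      rw [div_mul_div_comm, pow_succ]
      ring_nf
    · simp [h]
  refine ⟨h1, ?_⟩
  rw [h1, div_pow, one_pow, div_div_div_eq, mul_one,
    mul_div_assoc, div_self (pow_ne_zero _ hN), mul_one]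
end
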